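/- Let X be a Polish space, Y ⊆ ℝ^n analytic, and f : X × Y → ℝ upper semi-analytic (in the sense that {(x,y) ∈ X × Y : f(x,y) > γ} is analytic in X × ℝ^n for every γ). If there exist b : X → ℝ^n and c : X → ℝ with f(x,y) ≤ b(x)·y + c(x) for all x ∈ X, y ∈ Y, then there exist Borel measurable B : X → ℝ^n and C : X → ℝ with f(x,y) ≤ B(x)·y + C(x) for all x ∈ X, y ∈ Y. -/

import Mathlib

/-!
For fixed `x`, the slopes `B` in a box `[lo, hi]` with `f x y ≤ B ⬝ᵥ y + C` for all `y ∈ Y` form a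
compact convex set. If it is empty, then by Helly's theorem so is the set cut out by some `n + 1`
points `yᵢ ∈ Y`, and by compactness the values `f x yᵢ` may be lowered to rationals; hence, for
Borel `lo`, `hi`, `C`, the set of `x` without admissible slope is analytic.

Novikov's separation theorem, for countably many analytic sets with empty intersection, then gives a
Borel `J : X → ℕ` such that some `B ∈ [-J x, J x]ⁿ` is admissible with `C = J x`. Finally the
coordinates of `B` are fixed one at a time: the admissible values of a coordinate form a compact
interval `[a x, b x]` whose endpoints have analytic super- resp. sublevel sets, and Lusin's
separation theorem yields a Borel function squeezed between `a` and `b`.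
-/

open MeasureTheory Set Function PiNat

theorem Convex.exists_fin_iInter_eq_empty {ι 𝕜 E : Type*} [Field 𝕜] [LinearOrder 𝕜]
    [IsStrictOrderedRing 𝕜] [AddCommGroup E] [Module 𝕜 E] [TopologicalSpace E] [T2Space E]
    [FiniteDimensional 𝕜 E] [Nonempty ι] {F : ι → Set E} (h_convex : ∀ i, Convex 𝕜 (F i))
    (h_compact : ∀ i, IsCompact (F i)) (h : ⋂ i, F i = ∅) :
    ∃ g : Fin (Module.finrank 𝕜 E + 1) → ι, ⋂ k, F (g k) = ∅ := by
  classical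
  by_contra! hg
  refine (Convex.helly_theorem_compact' h_convex h_compact fun I hI => ?_).ne_empty h
  let g : Fin (Module.finrank 𝕜 E + 1) → ι := fun k => I.toList.getD k (Classical.arbitrary ι)
  refine (hg g).mono (subset_iInter₂ fun i hi => ?_)
  obtain ⟨k, hk, rfl⟩ := List.mem_iff_getElem.1 (Finset.mem_toList.2 hi)
  have hkN : k < Module.finrank 𝕜 E + 1 := (Finset.length_toList I ▸ hk).trans_le hI
  exact iInter_subset_of_subset ⟨k, hkN⟩ (by simp [g, List.getElem?_eq_getElem hk])

lemma MeasureTheory.AnalyticSet.inter {α : Type*} [TopologicalSpace α] [T2Space α]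
    {s t : Set α} (hs : AnalyticSet s) (ht : AnalyticSet t) : AnalyticSet (s ∩ t) := by
  rw [inter_eq_iInter]
  exact AnalyticSet.iInter fun b => by cases b <;> assumption

namespace HyperplaneSelection

section IccUpdate

variable {m α : Type*} [DecidableEq m]

lemma Icc_update_min [LinearOrder α] (lo hi : m → α) (i : m) (q : α) :
    Icc lo (update hi i (min (hi i) q)) = Icc lo hi ∩ {B | B i ≤ q} := by
  ext B
  simp only [mem_Icc, mem_inter_iff, mem_ofPred_eq, le_update_iff, le_min_iff]
  constructor
  · rintro ⟨hlo, ⟨hi₁, hq⟩, hhi⟩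
    exact ⟨⟨hlo, fun j => (eq_or_ne j i).elim (· ▸ hi₁) (hhi j)⟩, hq⟩
  · rintro ⟨⟨hlo, hhi⟩, hq⟩
    exact ⟨hlo, ⟨hhi i, hq⟩, fun j _ => hhi j⟩

lemma Icc_update_max [LinearOrder α] (lo hi : m → α) (i : m) (q : α) :
    Icc (update lo i (max (lo i) q)) hi = Icc lo hi ∩ {B | q ≤ B i} := by
  ext B
  simp only [mem_Icc, mem_inter_iff, mem_ofPred_eq, update_le_iff, max_le_iff]
  constructor
  · rintro ⟨⟨⟨hlo₁, hq⟩, hlo⟩, hhi⟩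
    exact ⟨⟨fun j => (eq_or_ne j i).elim (· ▸ hlo₁) (hlo j), hhi⟩, hq⟩
  · rintro ⟨⟨hlo, hhi⟩, hq⟩
    exact ⟨⟨⟨hlo i, hq⟩, fun j _ => hlo j⟩, hhi⟩

lemma mem_Icc_update_self [Preorder α] {lo hi B : m → α} (hB : B ∈ Icc lo hi) (i : m) :
    B ∈ Icc (update lo i (B i)) (update hi i (B i)) := by
  simp only [mem_Icc, update_le_iff, le_update_iff]
  exact ⟨⟨le_rfl, fun j _ => hB.1 j⟩, le_rfl, fun j _ => hB.2 j⟩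

end IccUpdate

section Feasible

variable {m ι : Type*} [Fintype m]

/-- With `t i = f x (y i) - C`, a point of `feasible lo hi y t` is a slope `B` in the box `[lo, hi]`
with `f x (y i) ≤ B ⬝ᵥ y i + C` for every `i`. -/
def feasible (lo hi : m → ℝ) (y : ι → m → ℝ) (t : ι → ℝ) : Set (m → ℝ) :=
  Icc lo hi ∩ ⋂ i, {B | t i ≤ B ⬝ᵥ y i}

lemma convex_feasible (lo hi : m → ℝ) (y : ι → m → ℝ) (t : ι → ℝ) :
    Convex ℝ (feasible lo hi y t) :=
  (convex_Icc lo hi).inter <| convex_iInter fun _ =>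
    convex_halfSpace_ge ⟨fun _ _ => add_dotProduct .., fun _ _ => smul_dotProduct ..⟩ _

lemma isCompact_feasible (lo hi : m → ℝ) (y : ι → m → ℝ) (t : ι → ℝ) :
    IsCompact (feasible lo hi y t) :=
  isCompact_Icc.inter_right <| isClosed_iInter fun _ =>
    isClosed_le continuous_const (continuous_id.dotProduct continuous_const)

lemma feasible_eq_iInter [Nonempty ι] (lo hi : m → ℝ) (y : ι → m → ℝ) (t : ι → ℝ) :
    feasible lo hi y t = ⋂ i, feasible lo hi (fun _ : Unit => y i) fun _ => t i := by
  simp only [feasible, iInter_const, inter_iInter]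

/-- Writing `B = lo + s * (hi - lo)` with `s ∈ [0,1]^m` makes the feasibility condition the
projection of a closed set along a compact factor. -/
lemma isClosed_setOf_feasible_nonempty :
    IsClosed {p : (m → ℝ) × (m → ℝ) × (ι → m → ℝ) × (ι → ℝ) |
      (feasible p.1 p.2.1 p.2.2.1 p.2.2.2).Nonempty} := by
  let point (z : ((m → ℝ) × (m → ℝ) × (ι → m → ℝ) × (ι → ℝ)) × (m → unitInterval)) : m → ℝ :=
    fun l => z.1.1 l + z.2 l * (z.1.2.1 l - z.1.1 l)
  have hpoint : Continuous point := by fun_prop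
  have key : {p : (m → ℝ) × (m → ℝ) × (ι → m → ℝ) × (ι → ℝ) |
      (feasible p.1 p.2.1 p.2.2.1 p.2.2.2).Nonempty} =
      {p | p.1 ≤ p.2.1} ∩ Prod.fst '' ⋂ i, {z | z.1.2.2.2 i ≤ point z ⬝ᵥ z.1.2.2.1 i} := by
    ext p
    simp only [feasible, mem_ofPred_eq, mem_inter_iff]
    constructor
    · rintro ⟨B, ⟨hlo, hhi⟩, hB⟩
      have hs : ∀ l, ∃ s ∈ Icc (0 : ℝ) 1, p.1 l + s • (p.2.1 l - p.1 l) = B l := fun l => by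
        rw [← mem_image, ← segment_eq_image', segment_eq_Icc (hlo.trans hhi l)]
        exact ⟨hlo l, hhi l⟩
      choose s hs01 hs using hs
      refine ⟨hlo.trans hhi, ⟨p, fun l => ⟨s l, hs01 l⟩⟩, mem_iInter.2 fun i => ?_, rfl⟩
      have hpB : point (p, fun l => ⟨s l, hs01 l⟩) = B := funext hs
      simpa only [mem_ofPred_eq, hpB] using mem_iInter.1 hB i
    · rintro ⟨hle, ⟨p, s⟩, hs, rfl⟩
      refine ⟨point (p, s), ⟨fun l => ?_, fun l => ?_⟩, mem_iInter.2 fun i => mem_iInter.1 hs i⟩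
      · exact le_add_of_nonneg_right (mul_nonneg (s l).2.1 (sub_nonneg.2 (hle l)))
      · have := mul_le_of_le_one_left (sub_nonneg.2 (hle l)) (s l).2.2
        simp only [point]
        linarith
  rw [key]
  exact (isClosed_le continuous_fst continuous_snd.fst).inter <|
    isClosedMap_fst_of_compactSpace _ <| isClosed_iInter fun i => isClosed_le (by fun_prop) (hpoint.dotProduct (by fun_prop))

lemma exists_rat_lt_of_feasible_eq_empty [Finite ι] {lo hi : m → ℝ} {y : ι → m → ℝ} {t : ι → ℝ}
    (h : feasible lo hi y t = ∅) :
    ∃ q : ι → ℚ, (∀ i, (q i : ℝ) < t i) ∧ feasible lo hi y (fun i => q i) = ∅ := by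
  have : Fintype ι := Fintype.ofFinite ι
  have hopen : IsOpen {s : ι → ℝ | feasible lo hi y s = ∅} := by
    simp_rw [← not_nonempty_iff_eq_empty]
    exact isClosed_setOf_feasible_nonempty.isOpen_compl.preimage (by fun_prop :
      Continuous fun s : ι → ℝ => (lo, hi, y, s))
  obtain ⟨ε, hε, hball⟩ := Metric.isOpen_iff.1 hopen t h
  have hq : ∀ i, ∃ q : ℚ, t i - ε < q ∧ (q : ℝ) < t i := fun i =>
    exists_rat_btwn (sub_lt_self _ hε)
  choose q hq₁ hq₂ using hq
  refine ⟨q, hq₂, hball ((dist_pi_lt_iff hε).2 fun i => ?_)⟩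
  rw [Real.dist_eq, abs_sub_lt_iff]
  constructor <;> linarith [hq₁ i, hq₂ i]

variable [DecidableEq m]

lemma feasible_update_min (lo hi : m → ℝ) (y : ι → m → ℝ) (t : ι → ℝ) (i : m) (q : ℝ) :
    feasible lo (update hi i (min (hi i) q)) y t = feasible lo hi y t ∩ {B | B i ≤ q} := by
  rw [feasible, feasible, Icc_update_min, inter_right_comm]

lemma feasible_update_max (lo hi : m → ℝ) (y : ι → m → ℝ) (t : ι → ℝ) (i : m) (q : ℝ) :
    feasible (update lo i (max (lo i) q)) hi y t = feasible lo hi y t ∩ {B | q ≤ B i} := by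
  rw [feasible, feasible, Icc_update_max, inter_right_comm]

end Feasible

section Separation

variable {X ι : Type*} [MeasurableSpace X]

def MeasurablySeparableFamily (S : ι → Set X) : Prop :=
  ∃ V : ι → Set X, (∀ j, S j ⊆ V j) ∧ (∀ j, MeasurableSet (V j)) ∧ ⋂ j, V j = ∅

lemma MeasurablySeparable.measurablySeparableFamily {S : ι → Set X} {j₁ j₂ : ι}
    (h : MeasurablySeparable (S j₁) (S j₂)) : MeasurablySeparableFamily S := by
  classical
  obtain ⟨u, hsu, hdisj, hu⟩ := h
  refine ⟨fun j => (if j = j₁ then u else univ) ∩ (if j = j₂ then uᶜ else univ),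
    fun j => subset_inter ?_ ?_, fun j => ?_, ?_⟩
  · split_ifs with h
    exacts [h ▸ hsu, subset_univ _]
  · split_ifs with h
    exacts [h ▸ hdisj.subset_compl_right, subset_univ _]
  · exact (MeasurableSet.ite' (fun _ => hu) fun _ => .univ).inter
      (MeasurableSet.ite' (fun _ => hu.compl) fun _ => .univ)
  · refine eq_empty_of_subset_empty fun x hx => ?_
    have h₁ := (mem_iInter.1 hx j₁).1
    have h₂ := (mem_iInter.1 hx j₂).2
    simp only [if_true] at h₁ h₂
    exact h₂ h₁

lemma MeasurablySeparableFamily.of_update_iUnion [DecidableEq ι] {κ : Type*} [Countable κ]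
    {S : ι → Set X} {j₀ : ι} {T : κ → Set X} (hS : S j₀ ⊆ ⋃ k, T k)
    (h : ∀ k, MeasurablySeparableFamily (update S j₀ (T k))) : MeasurablySeparableFamily S := by
  choose V hSV hV hVe using h
  refine ⟨update (fun j => ⋂ k, V k j) j₀ (⋃ k, V k j₀), fun j => ?_, fun j => ?_, ?_⟩
  · rcases eq_or_ne j j₀ with rfl | hj
    · rw [update_self]
      exact hS.trans (iUnion_mono fun k => by simpa using hSV k j)
    · rw [update_of_ne hj]
      exact subset_iInter fun k => by simpa [hj] using hSV k j
  · rcases eq_or_ne j j₀ with rfl | hj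
    · simpa using MeasurableSet.iUnion fun k => hV k j
    · simpa [hj] using MeasurableSet.iInter fun k => hV k j
  · refine eq_empty_of_subset_empty fun x hx => ?_
    obtain ⟨k, hk⟩ := mem_iUnion.1 (by simpa using mem_iInter.1 hx j₀)
    rw [← hVe k]
    refine mem_iInter.2 fun j => ?_
    rcases eq_or_ne j j₀ with rfl | hj
    · exact hk
    · have hxj := mem_iInter.1 hx j
      rw [update_of_ne hj] at hxj
      exact mem_iInter.1 hxj k

end Separation

lemma exists_forall_cylinder {P : Set (ℕ → ℕ) → Prop} (h₀ : P univ)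
    (hstep : ∀ σ t, P (PiNat.cylinder σ t) → ∃ k, P (PiNat.cylinder (update σ t k) (t + 1))) :
    ∃ σ, ∀ t, P (PiNat.cylinder σ t) := by
  choose k hk using hstep
  let seq : (t : ℕ) → {σ // P (PiNat.cylinder σ t)} := fun t => Nat.rec ⟨0, by simpa using h₀⟩
    (fun t σ => ⟨update σ.1 t (k σ.1 t σ.2), hk σ.1 t σ.2⟩) t
  refine ⟨fun i => (seq (i + 1)).1 i, fun t => ?_⟩
  suffices ∀ t, ∀ i < t, (seq t).1 i = (seq (i + 1)).1 i by
    rw [← mem_cylinder_iff_eq.1 (mem_cylinder_iff.2 (this t))]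
    exact (seq t).2
  intro t
  induction t with
  | zero => simp
  | succ t ih =>
    intro i hi
    rcases (Nat.lt_succ_iff_lt_or_eq.1 hi) with hi | rfl
    · exact (update_of_ne hi.ne _ _).trans (ih i hi)
    · rfl

lemma exists_cylinder_subset {E : ℕ → Type*} [∀ n, TopologicalSpace (E n)]
    [∀ n, DiscreteTopology (E n)] {σ : ∀ n, E n} {W : Set (∀ n, E n)} (hW : IsOpen W)
    (hσ : σ ∈ W) : ∃ n, PiNat.cylinder σ n ⊆ W := by
  obtain ⟨_, ⟨τ, n, rfl⟩, hστ, hsub⟩ :=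
    (isTopologicalBasis_cylinders E).exists_subset_of_mem_open hσ hW
  exact ⟨n, (mem_cylinder_iff_eq.1 hστ).symm ▸ hsub⟩

section AnalyticSeparation

variable {X : Type*} [TopologicalSpace X] [T2Space X] [MeasurableSpace X] [OpensMeasurableSpace X]

lemma image_cylinder_update_of_ne {Z : Type*} (g : (ℕ → ℕ) → Z) {j t : ℕ}
    (hj : (Nat.unpair t).1 ≠ j) (σ : ℕ → ℕ) (k : ℕ) :
    (fun τ => g fun i => τ (Nat.pair j i)) '' PiNat.cylinder (update σ t k) (t + 1) =
      (fun τ => g fun i => τ (Nat.pair j i)) '' PiNat.cylinder σ t := by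
  refine (image_mono fun τ hτ => mem_cylinder_iff.2 fun i hi => ?_).antisymm ?_
  · exact (mem_cylinder_iff.1 hτ i (by omega)).trans (update_of_ne hi.ne _ _)
  rintro _ ⟨τ, hτ, rfl⟩
  refine ⟨update τ t k, mem_cylinder_iff.2 fun i hi => ?_, ?_⟩
  · rcases Nat.lt_succ_iff_lt_or_eq.1 hi with hi | rfl
    · simp only [update_of_ne hi.ne, mem_cylinder_iff.1 hτ i hi]
    · simp
  · have hpair : ∀ i, Nat.pair j i ≠ t := by
      rintro i rfl
      simp at hj
    simp only [update_of_ne (hpair _)]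

theorem measurablySeparableFamily_range {g : ℕ → (ℕ → ℕ) → X} (hg : ∀ j, Continuous (g j))
    (h : ⋂ j, range (g j) = ∅) : MeasurablySeparableFamily fun j => range (g j) := by
  classical
  -- all the `g j` are made to live on one copy of `ℕ → ℕ`, `g j` reading the coordinates `⟨j, ·⟩`
  let G : ℕ → (ℕ → ℕ) → X := fun j τ => g j fun i => τ (Nat.pair j i)
  have hG : ∀ j, Continuous (G j) := fun j => (hg j).comp (by fun_prop)
  have hrange : ∀ j, range (G j) = range (g j) := by
    refine fun j => (range_comp_subset_range _ _).antisymm ?_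
    rintro _ ⟨σ, rfl⟩
    exact ⟨fun n => σ (Nat.unpair n).2, by simp⟩
  by_contra hsep
  obtain ⟨σ, hσ⟩ := exists_forall_cylinder
    (P := fun C => ¬MeasurablySeparableFamily fun j => G j '' C) (by simpa [hrange] using hsep)
    fun σ t hσt => by
      by_contra! hk
      refine hσt (MeasurablySeparableFamily.of_update_iUnion (j₀ := (Nat.unpair t).1)
        (T := fun k => G (Nat.unpair t).1 '' PiNat.cylinder (update σ t k) (t + 1)) ?_ fun k => ?_)
      · rw [← image_iUnion, iUnion_cylinder_update σ t]
      · convert hk k using 2 with j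
        rcases eq_or_ne j (Nat.unpair t).1 with rfl | hj
        · rw [update_self]
        · rw [update_of_ne hj, image_cylinder_update_of_ne _ hj.symm]
  obtain ⟨j₁, hj₁⟩ : ∃ j, G j σ ≠ G 0 σ := by
    by_contra! hall
    have hmem : G 0 σ ∈ ⋂ j, range (g j) :=
      mem_iInter.2 fun j => hrange j ▸ ⟨σ, hall j⟩
    rwa [h] at hmem
  obtain ⟨u, v, hu, hv, hσu, hσv, huv⟩ := t2_separation hj₁
  obtain ⟨n, hn⟩ := exists_cylinder_subset ((hu.preimage (hG j₁)).inter (hv.preimage (hG 0)))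
    ⟨hσu, hσv⟩
  refine hσ n (MeasurablySeparable.measurablySeparableFamily (j₁ := j₁) (j₂ := 0)
    ⟨u, image_subset_iff.2 fun τ hτ => (hn hτ).1, ?_, hu.measurableSet⟩)
  exact huv.symm.mono_left (image_subset_iff.2 fun τ hτ => (hn hτ).2)

theorem _root_.MeasureTheory.AnalyticSet.measurablySeparableFamily {A : ℕ → Set X}
    (hA : ∀ j, AnalyticSet (A j)) (h : ⋂ j, A j = ∅) : MeasurablySeparableFamily A := by
  by_cases hempty : ∃ j, A j = ∅
  · obtain ⟨j, hj⟩ := hempty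
    exact MeasurablySeparable.measurablySeparableFamily (j₁ := j) (j₂ := j)
      ⟨∅, hj.le, disjoint_empty _, .empty⟩
  rw [not_exists] at hempty
  have hrange : ∀ j, ∃ g : (ℕ → ℕ) → X, Continuous g ∧ range g = A j := fun j => by
    have := hA j
    rw [AnalyticSet] at this
    exact this.resolve_left (hempty j)
  choose g hg hgA using hrange
  simpa only [hgA] using measurablySeparableFamily_range hg (by simpa only [hgA] using h)

theorem exists_measurable_forall_notMem {A : ℕ → Set X} (hA : ∀ j, AnalyticSet (A j))
    (h : ∀ x, ∃ j, x ∉ A j) : ∃ J : X → ℕ, Measurable J ∧ ∀ x, x ∉ A (J x) := by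
  classical
  obtain ⟨V, hAV, hV, hVe⟩ :=
    AnalyticSet.measurablySeparableFamily hA (iInter_eq_empty_iff.2 h)
  have hx : ∀ x, ∃ j, x ∉ V j := iInter_eq_empty_iff.1 hVe
  exact ⟨fun x => Nat.find (hx x), measurable_find hx fun j => (hV j).compl,
    fun x hx' => Nat.find_spec (hx x) (hAV _ hx')⟩

theorem exists_measurable_between {a b : X → ℝ} (hab : ∀ x, a x ≤ b x)
    (ha : ∀ q : ℚ, AnalyticSet {x | q < a x}) (hb : ∀ q : ℚ, AnalyticSet {x | b x < q}) :
    ∃ w : X → ℝ, Measurable w ∧ ∀ x, a x ≤ w x ∧ w x ≤ b x := by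
  have hsep (q : ℚ) : MeasurablySeparable {x | q < a x} {x | b x < q} :=
    (ha q).measurablySeparable (hb q) <| disjoint_left.2 fun x h₁ h₂ => by
      simp only [mem_ofPred_eq] at h₁ h₂
      linarith [hab x]
  choose W haW hWb hW using hsep
  have hle (x : X) (q : ℚ) (hx : x ∈ W q) : (q : ℝ) ≤ b x :=
    not_lt.1 fun hlt => disjoint_left.1 (hWb q) hlt hx
  let S (x : X) : Set ℝ := (↑) '' {q : ℚ | x ∈ W q}
  have hne (x : X) : (S x).Nonempty :=
    let ⟨q, hq⟩ := exists_rat_lt (a x)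
    ⟨q, q, haW q hq, rfl⟩
  have hbdd (x : X) : BddAbove (S x) := ⟨b x, by rintro _ ⟨q, hq, rfl⟩; exact hle x q hq⟩
  refine ⟨fun x => sSup (S x), measurable_of_Ioi fun γ => ?_, fun x => ⟨?_, ?_⟩⟩
  · have hpre : (fun x => sSup (S x)) ⁻¹' Ioi γ = ⋃ (q : ℚ) (_ : γ < q), W q := by
      ext x
      simp [S, lt_csSup_iff (hbdd x) (hne x), and_comm]
    rw [hpre]
    exact .iUnion fun q => .iUnion fun _ => hW q
  · exact le_of_forall_rat_lt_imp_le fun q hq => le_csSup (hbdd x) ⟨q, haW q hq, rfl⟩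
  · exact csSup_le (hne x) (by rintro _ ⟨q, hq, rfl⟩; exact hle x q hq)

end AnalyticSeparation

section Analytic

variable {X E : Type*} [TopologicalSpace X] [TopologicalSpace E]

def UpperSemianalyticOn (f : X → E → ℝ) (Y : Set E) : Prop :=
  ∀ γ : ℝ, AnalyticSet {p : X × E | p.2 ∈ Y ∧ γ < f p.1 p.2}

variable [PolishSpace X] [MeasurableSpace X] [BorelSpace X]

lemma UpperSemianalyticOn.sub [PolishSpace E] {f : X → E → ℝ} {Y : Set E}
    (hf : UpperSemianalyticOn f Y) {ρ : X → ℝ} (hρ : Measurable ρ) :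
    UpperSemianalyticOn (fun x y => f x y - ρ x) Y := by
  intro γ
  have key : {p : X × E | p.2 ∈ Y ∧ γ < f p.1 p.2 - ρ p.1} =
      ⋃ q : ℚ, {p | p.2 ∈ Y ∧ q < f p.1 p.2} ∩ Prod.fst ⁻¹' {x | ρ x < q - γ} := by
    ext p
    simp only [mem_ofPred_eq, mem_iUnion, mem_inter_iff, mem_preimage]
    constructor
    · rintro ⟨hY, hlt⟩
      obtain ⟨q, hq₁, hq₂⟩ := exists_rat_btwn (lt_sub_iff_add_lt'.1 hlt)
      exact ⟨q, ⟨hY, hq₂⟩, by linarith⟩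
    · rintro ⟨q, ⟨hY, hq⟩, hρq⟩
      exact ⟨hY, by linarith⟩
  rw [key]
  exact AnalyticSet.iUnion fun q => (hf q).inter <|
    (measurableSet_lt hρ measurable_const).analyticSet.preimage continuous_fst

variable {m : Type*} [Fintype m]

theorem analyticSet_setOf_feasible_eq_empty {Y : Set (m → ℝ)} [Nonempty Y]
    {f : X → (m → ℝ) → ℝ} (hf : UpperSemianalyticOn f Y) {lo hi : X → m → ℝ}
    (hlo : Measurable lo) (hhi : Measurable hi) :
    AnalyticSet {x | feasible (lo x) (hi x) ((↑) : Y → m → ℝ) (fun y => f x y) = ∅} := by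
  let N := Module.finrank ℝ (m → ℝ) + 1
  have key : {x | feasible (lo x) (hi x) ((↑) : Y → m → ℝ) (fun y => f x y) = ∅} =
      ⋃ q : Fin N → ℚ, Prod.fst '' ((⋂ k, {p : X × (Fin N → m → ℝ) |
        p.2 k ∈ Y ∧ q k < f p.1 (p.2 k)}) ∩
        {p | ¬(feasible (lo p.1) (hi p.1) p.2 fun k => (q k : ℝ)).Nonempty}) := by
    ext x
    simp only [mem_ofPred_eq, mem_iUnion]
    constructor
    · intro hx
      obtain ⟨g, hg⟩ := Convex.exists_fin_iInter_eq_empty (𝕜 := ℝ)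
        (F := fun y : Y => feasible (lo x) (hi x) (fun _ : Unit => (y : m → ℝ)) fun _ => f x y)
        (fun _ => convex_feasible ..) (fun _ => isCompact_feasible ..)
        (by rw [← feasible_eq_iInter]; exact hx)
      rw [← feasible_eq_iInter (y := fun k => (g k : m → ℝ)) (t := fun k => f x (g k))] at hg
      obtain ⟨q, hq, hqe⟩ := exists_rat_lt_of_feasible_eq_empty hg
      exact ⟨q, (x, fun k => g k), ⟨mem_iInter.2 fun k => ⟨(g k).2, hq k⟩,
        not_nonempty_iff_eq_empty.2 hqe⟩, rfl⟩
    · rintro ⟨q, ⟨x', ys⟩, ⟨hys, hempty⟩, rfl⟩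
      refine eq_empty_iff_forall_notMem.2 fun B hB => hempty ⟨B, hB.1, mem_iInter.2 fun k => ?_⟩
      obtain ⟨hyk, hqk⟩ := mem_iInter.1 hys k
      exact hqk.le.trans (mem_iInter.1 hB.2 ⟨ys k, hyk⟩)
  rw [key]
  refine AnalyticSet.iUnion fun q => AnalyticSet.image_of_continuous ?_ continuous_fst
  refine AnalyticSet.inter (AnalyticSet.iInter fun k => (hf (q k)).preimage
    (continuous_fst.prodMk ((continuous_apply k).comp continuous_snd))) ?_
  refine MeasurableSet.analyticSet ?_
  exact ((hlo.comp measurable_fst).prodMk ((hhi.comp measurable_fst).prodMk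
    (measurable_snd.prodMk measurable_const))) isClosed_setOf_feasible_nonempty.measurableSet.compl

end Analytic

section Selection

variable {X : Type*} [TopologicalSpace X] [PolishSpace X] [MeasurableSpace X] [BorelSpace X]
  {m : Type*} [Fintype m] {Y : Set (m → ℝ)} [Nonempty Y] {f : X → (m → ℝ) → ℝ}

theorem exists_measurable_nat_feasible_nonempty (hf : UpperSemianalyticOn f Y)
    (b : X → m → ℝ) (c : X → ℝ) (hdom : ∀ x, ∀ y ∈ Y, f x y ≤ b x ⬝ᵥ y + c x) :
    ∃ J : X → ℕ, Measurable J ∧ ∀ x, (feasible (fun _ => -(J x : ℝ)) (fun _ => (J x : ℝ))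
      ((↑) : Y → m → ℝ) fun y => f x y - J x).Nonempty := by
  have hA (j : ℕ) : AnalyticSet {x | feasible (fun _ => -(j : ℝ)) (fun _ => (j : ℝ))
      ((↑) : Y → m → ℝ) (fun y => f x y - j) = ∅} :=
    analyticSet_setOf_feasible_eq_empty (hf.sub measurable_const) measurable_const
      measurable_const
  have hbound (x : X) : ∃ j : ℕ, ¬feasible (fun _ => -(j : ℝ)) (fun _ => (j : ℝ))
      ((↑) : Y → m → ℝ) (fun y => f x y - j) = ∅ := by
    obtain ⟨j, hj⟩ := exists_nat_ge (max ‖b x‖ (c x))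
    have hb (l : m) : |b x l| ≤ j := (norm_le_pi_norm (b x) l).trans ((le_max_left _ _).trans hj)
    have hc : c x ≤ j := (le_max_right _ _).trans hj
    refine ⟨j, nonempty_iff_ne_empty.1 ⟨b x, ⟨fun l => (abs_le.1 (hb l)).1,
      fun l => (abs_le.1 (hb l)).2⟩, mem_iInter.2 fun y => ?_⟩⟩
    show f x y - j ≤ b x ⬝ᵥ y
    linarith [hdom x y y.2]
  obtain ⟨J, hJ, hJA⟩ := exists_measurable_forall_notMem hA hbound
  exact ⟨J, hJ, fun x => nonempty_iff_ne_empty.2 (hJA x)⟩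

variable [DecidableEq m]

theorem exists_measurable_update_feasible_nonempty (hf : UpperSemianalyticOn f Y)
    {lo hi : X → m → ℝ} (hlo : Measurable lo) (hhi : Measurable hi)
    (hne : ∀ x, (feasible (lo x) (hi x) ((↑) : Y → m → ℝ) fun y => f x y).Nonempty) (i : m) :
    ∃ w : X → ℝ, Measurable w ∧ ∀ x,
      (feasible (update (lo x) i (w x)) (update (hi x) i (w x)) ((↑) : Y → m → ℝ)
        fun y => f x y).Nonempty := by
  let K (x : X) := feasible (lo x) (hi x) ((↑) : Y → m → ℝ) fun y => f x y
  let P (x : X) := (fun B : m → ℝ => B i) '' K x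
  have hK (x : X) : IsCompact (K x) := isCompact_feasible ..
  have hP (x : X) : IsCompact (P x) := (hK x).image (continuous_apply i)
  have hPne (x : X) : (P x).Nonempty := (hne x).image _
  have hlt_sInf (x : X) (q : ℝ) : q < sInf (P x) ↔ K x ∩ {B | B i ≤ q} = ∅ := by
    rw [(hK x).lt_sInf_iff_of_continuous (hne x) (continuous_apply i).continuousOn]
    simp only [eq_empty_iff_forall_notMem, mem_inter_iff, mem_ofPred_eq, not_and, not_le]
  have hsSup_lt (x : X) (q : ℝ) : sSup (P x) < q ↔ K x ∩ {B | q ≤ B i} = ∅ := by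
    rw [(hK x).sSup_lt_iff_of_continuous (hne x) (continuous_apply i).continuousOn]
    simp only [eq_empty_iff_forall_notMem, mem_inter_iff, mem_ofPred_eq, not_and, not_le]
  have ha (q : ℚ) : AnalyticSet {x | q < sInf (P x)} := by
    have hset : {x | q < sInf (P x)} = {x | feasible (lo x) (update (hi x) i (min (hi x i) q))
        ((↑) : Y → m → ℝ) (fun y => f x y) = ∅} := by
      ext x
      rw [mem_ofPred_eq, mem_ofPred_eq, hlt_sInf, feasible_update_min]
    rw [hset]
    exact analyticSet_setOf_feasible_eq_empty hf hlo (by fun_prop)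
  have hb (q : ℚ) : AnalyticSet {x | sSup (P x) < q} := by
    have hset : {x | sSup (P x) < q} = {x | feasible (update (lo x) i (max (lo x i) q)) (hi x)
        ((↑) : Y → m → ℝ) (fun y => f x y) = ∅} := by
      ext x
      rw [mem_ofPred_eq, mem_ofPred_eq, hsSup_lt, feasible_update_max]
    rw [hset]
    exact analyticSet_setOf_feasible_eq_empty hf (by fun_prop) hhi
  obtain ⟨w, hw, hwP⟩ := exists_measurable_between
    (fun x => csInf_le_csSup (hPne x) (hP x).bddBelow (hP x).bddAbove) ha hb
  refine ⟨w, hw, fun x => ?_⟩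
  have hconv : (P x).OrdConnected :=
    ((convex_feasible ..).linear_image (LinearMap.proj (R := ℝ) (φ := fun _ : m => ℝ) i))
      |>.ordConnected
  obtain ⟨B, hB, hBi⟩ := hconv.out ((hP x).sInf_mem (hPne x)) ((hP x).sSup_mem (hPne x)) (hwP x)
  exact ⟨B, hBi ▸ mem_Icc_update_self hB.1 i, hB.2⟩

theorem exists_measurable_forall_le_dotProduct (hf : UpperSemianalyticOn f Y)
    {lo hi : X → m → ℝ} (hlo : Measurable lo) (hhi : Measurable hi)
    (hne : ∀ x, (feasible (lo x) (hi x) ((↑) : Y → m → ℝ) fun y => f x y).Nonempty) :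
    ∃ B : X → m → ℝ, Measurable B ∧ ∀ x, ∀ y ∈ Y, f x y ≤ B x ⬝ᵥ y := by
  have hfix (s : Finset m) : ∃ lo' hi' : X → m → ℝ, Measurable lo' ∧ Measurable hi' ∧
      (∀ x, (feasible (lo' x) (hi' x) ((↑) : Y → m → ℝ) fun y => f x y).Nonempty) ∧
      ∀ x, ∀ i ∈ s, lo' x i = hi' x i := by
    induction s using Finset.induction_on with
    | empty => exact ⟨lo, hi, hlo, hhi, hne, by simp⟩
    | insert i s _ ih =>
      obtain ⟨lo', hi', hlo', hhi', hne', heq⟩ := ih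
      obtain ⟨w, hw, hne''⟩ := exists_measurable_update_feasible_nonempty hf hlo' hhi' hne' i
      refine ⟨fun x => update (lo' x) i (w x), fun x => update (hi' x) i (w x), by fun_prop,
        by fun_prop, hne'', fun x j hj => ?_⟩
      rcases eq_or_ne j i with rfl | hji
      · simp
      · simp [update_of_ne hji, heq x j (Finset.mem_of_mem_insert_of_ne hj hji)]
  obtain ⟨lo', hi', hlo', -, hne', heq⟩ := hfix Finset.univ
  refine ⟨lo', hlo', fun x y hy => ?_⟩
  obtain ⟨B, hBIcc, hB⟩ := hne' x
  have hBlo : B = lo' x :=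
    le_antisymm (hBIcc.2.trans fun i => (heq x i (Finset.mem_univ i)).ge) hBIcc.1
  exact hBlo ▸ mem_iInter.1 hB ⟨y, hy⟩

end Selection

end HyperplaneSelection

theorem hyperplane_selection_analytic_general {X : Type*} [TopologicalSpace X] [PolishSpace X]
    [MeasurableSpace X] [BorelSpace X]
    {n : ℕ} (Y : Set (Fin n → ℝ))
    (f : X → (Fin n → ℝ) → ℝ)
    (husa : ∀ γ : ℝ, AnalyticSet {p : X × (Fin n → ℝ) | p.2 ∈ Y ∧ γ < f p.1 p.2})
    (b : X → Fin n → ℝ) (c : X → ℝ)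
    (hdom : ∀ x, ∀ y ∈ Y, f x y ≤ (∑ i, b x i * y i) + c x) :
    ∃ (B : X → Fin n → ℝ) (C : X → ℝ), Measurable B ∧ Measurable C ∧
      ∀ x, ∀ y ∈ Y, f x y ≤ (∑ i, B x i * y i) + C x := by
  rcases isEmpty_or_nonempty Y with hY | hY
  · exact ⟨0, 0, measurable_const, measurable_const, fun x y hy => (hY.false ⟨y, hy⟩).elim⟩
  obtain ⟨J, hJ, hJY⟩ :=
    HyperplaneSelection.exists_measurable_nat_feasible_nonempty husa b c hdom
  have hJℝ : Measurable fun x => (J x : ℝ) := measurable_from_nat.comp hJ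
  obtain ⟨B, hB, hBY⟩ := HyperplaneSelection.exists_measurable_forall_le_dotProduct
    (HyperplaneSelection.UpperSemianalyticOn.sub husa hJℝ) (lo := fun x (_ : Fin n) => -(J x : ℝ))
    (hi := fun x (_ : Fin n) => (J x : ℝ)) (by fun_prop) (by fun_prop) hJY
  exact ⟨B, fun x => J x, hB, hJℝ, fun x y hy => sub_le_iff_le_add.1 (hBY x y hy)⟩

/-- Hyperplane selection over an analytic domain Y ⊆ ℝⁿ. -/
theorem hyperplane_selection_analytic {X : Type*} [TopologicalSpace X] [PolishSpace X]
    [MeasurableSpace X] [BorelSpace X]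
    {n : ℕ} (Y : Set (Fin n → ℝ)) (hY : AnalyticSet Y)
    (f : X → (Fin n → ℝ) → ℝ)
    (husa : ∀ γ : ℝ, AnalyticSet {p : X × (Fin n → ℝ) | p.2 ∈ Y ∧ γ < f p.1 p.2})
    (b : X → Fin n → ℝ) (c : X → ℝ)
    (hdom : ∀ x, ∀ y ∈ Y, f x y ≤ (∑ i, b x i * y i) + c x) :
    ∃ (B : X → Fin n → ℝ) (C : X → ℝ), Measurable B ∧ Measurable C ∧
      ∀ x, ∀ y ∈ Y, f x y ≤ (∑ i, B x i * y i) + C x :=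
  hyperplane_selection_analytic_general Y f husa b c hdom
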